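/- arXiv:math/0412450 — 4 statements merged into one kernel-verified Lean document; each statement's English description precedes it below -/
import Mathlib

section
/- For every δ > 0, every a > 0, and every integer b ≥ 2, there exist p₀ < 1 and β₀ < ∞ such that for all p ∈ [p₀,1), all β ≥ β₀, all h ≥ −(b−1) + a, and every integer ℓ ≥ 1: P(R^ℓ(ω) > e^{−2β}) ≤ δ, where the environment ω is random with ω_r = +1 fixed and {ω_x}_{x ≠ r} i.i.d. with P(ω_x = +1) = p. -/
open scoped BigOperators ENNReal
open MeasureTheory

namespace Paper

/-- Vertices of the rooted `b`-ary tree: finite words over an alphabet of size `b`. -/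
abbrev V (b : ℕ) : Type := List (Fin b)

/-- The finset of vertices at depth exactly `n`. -/
def wordsOfLen (b : ℕ) : ℕ → Finset (V b)
  | 0 => {([] : V b)}
  | n + 1 => (wordsOfLen b n).biUnion fun x => Finset.univ.image fun k : Fin b => x ++ [k]

/-- The finset `T_ℓ` of vertices at depth at most `ℓ`. -/
def ball (b ℓ : ℕ) : Finset (V b) := (Finset.range (ℓ + 1)).biUnion (wordsOfLen b)

/-- `x` belongs to `T(ω)`, the connected component of the root inside the set of free
vertices (`ω = true` means free): every vertex on the path from the root to `x` is free. -/
def inT (b : ℕ) (ω : V b → Bool) (x : V b) : Bool :=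
  (List.range (x.length + 1)).all fun k => ω (x.take k)

/-- Neighbours of a vertex: its `b` children and (if it is not the root) its parent. -/
def nbrs (b : ℕ) (x : V b) : Finset (V b) :=
  (Finset.univ.image fun k : Fin b => x ++ [k]) ∪
    (if x = ([] : V b) then ∅ else {x.dropLast})

/-- The (outer) boundary `∂A` of a set of vertices. -/
def bdry (b : ℕ) (A : Finset (V b)) : Finset (V b) := (A.biUnion (nbrs b)) \ A

/-- Spin value of a Boolean: `true ↦ +1`, `false ↦ -1`. -/
noncomputable def spin (s : Bool) : ℝ := if s then 1 else -1

/-- Ising energy (with a `+` sign, i.e. `β(Σ_{xy ∈ E(A∪∂A)} σ_x σ_y + h Σ_{x∈A} σ_x)`)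
of the configuration `c` in the region `A`; the edges of `A ∪ ∂A` are enumerated as pairs
(parent y, y) with both endpoints in `A ∪ ∂A`; the edge from `cut` to its parent is removed
(taking `cut = []` removes nothing). -/
noncomputable def energy (b : ℕ) (β h : ℝ) (A : Finset (V b)) (cut : V b)
    (c : V b → Bool) : ℝ :=
  β * ((∑ y ∈ (A ∪ bdry b A).filter
        (fun y => y ≠ ([] : V b) ∧ y ≠ cut ∧ y.dropLast ∈ A ∪ bdry b A),
          spin (c y.dropLast) * spin (c y))
      + h * ∑ x ∈ A, spin (c x))

/-- Configuration on all of `𝕋^b` equal to `σ` on `A` and to the boundary condition `ω`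
off `A`. -/
def glue (b : ℕ) (A : Finset (V b)) (ω : V b → Bool) (σ : {x // x ∈ A} → Bool) :
    V b → Bool :=
  fun x => if hx : x ∈ A then σ ⟨x, hx⟩ else ω x

/-- Expectation of the observable `g` under the Ising Gibbs measure on `A` with parameters
`(β, h)`, boundary condition `ω`, and the edge from `cut` to its parent removed. -/
noncomputable def gibbsExp (b : ℕ) (β h : ℝ) (A : Finset (V b)) (cut : V b)
    (ω : V b → Bool) (g : (V b → Bool) → ℝ) : ℝ :=
  (∑ σ : {x // x ∈ A} → Bool,
      Real.exp (energy b β h A cut (glue b A ω σ)) * g (glue b A ω σ)) /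
  (∑ σ : {x // x ∈ A} → Bool, Real.exp (energy b β h A cut (glue b A ω σ)))

/-- The region `T_ℓ ∩ T(ω)`. -/
def region (b ℓ : ℕ) (ω : V b → Bool) : Finset (V b) :=
  (ball b ℓ).filter fun x => inT b ω x = true

/-- The ratio `R^ℓ(ω) = μ⁺_{ℓ,ω}(σ_r = -1) / μ⁺_{ℓ,ω}(σ_r = +1)`, with value `⊤`
when the root is an obstacle. -/
noncomputable def RfinE (b : ℕ) (β h : ℝ) (ℓ : ℕ) (ω : V b → Bool) : ℝ≥0∞ :=
  if ω ([] : V b) = true then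
    ENNReal.ofReal
      ((gibbsExp b β h (region b ℓ ω) [] ω fun c => if c ([] : V b) = false then 1 else 0) /
       (gibbsExp b β h (region b ℓ ω) [] ω fun c => if c ([] : V b) = true then 1 else 0))
  else ⊤

/-- `P` is the law of i.i.d. Bernoulli(`p`) spins (`+1`, i.e. `true`, with probability `p`)
on the vertices of `𝕋^b`. -/
def IsBernoulliProduct (b : ℕ) (p : ℝ) (P : Measure (V b → Bool)) : Prop :=
  IsProbabilityMeasure P ∧
    ∀ (F : Finset (V b)) (g : V b → Bool),
      P {ω | ∀ x ∈ F, ω x = g x} =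
        ∏ x ∈ F, ENNReal.ofReal (if g x then p else 1 - p)

/-- `P` is the law of the random environment whose root spin is `+1` (free) almost surely
and whose other spins are i.i.d. Bernoulli(`p`). -/
def IsBernoulliProductRoot (b : ℕ) (p : ℝ) (P : Measure (V b → Bool)) : Prop :=
  IsProbabilityMeasure P ∧
    ∀ (F : Finset (V b)) (g : V b → Bool), ([] : V b) ∉ F →
      P {ω | ω ([] : V b) = true ∧ ∀ x ∈ F, ω x = g x} =
        ∏ x ∈ F, ENNReal.ofReal (if g x then p else 1 - p)

/-!
Peierls argument. Flipping the minus cluster `C` of the root, a rooted subtree of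
`T_ℓ ∩ T(ω)`, to `+1` raises the energy by `2β` times the sum of the spins of its
`(b - 1)|C| + 1` outer children plus `2βh|C|`. If at most `a|C|/4` of those children are
obstacles, this multiplies the weight by at least `e^{β(2 + a|C|)}`, and summing
`e^{-βa|C|}` over rooted subtrees (generating function `≤ 2z` at `z ≤ 1/(4(b+1))`) gives
`R^ℓ ≤ e^{-2β}`. A rooted subtree of size `n` has at most `2^{bn}` candidate obstacle sets
of size `> an/4`, each of probability at most `(1-p)^{an/4}`, so the same generating
function bounds the probability that the obstacle condition fails somewhere.
-/

open Finset

section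

variable {b : ℕ}

lemma mem_wordsOfLen {x : V b} {n : ℕ} : x ∈ wordsOfLen b n ↔ x.length = n := by
  induction n generalizing x with
  | zero => simp [wordsOfLen]
  | succ n ih =>
    simp only [wordsOfLen, mem_biUnion, mem_image, mem_univ, true_and, ih]
    constructor
    · rintro ⟨y, hy, k, rfl⟩
      simp [hy]
    · intro hx
      have hne : x ≠ [] := by rintro rfl; simp at hx
      exact ⟨x.dropLast, by simp [hx], x.getLast hne, x.dropLast_append_getLast hne⟩

lemma mem_ball {x : V b} {ℓ : ℕ} : x ∈ ball b ℓ ↔ x.length ≤ ℓ := by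
  simp only [ball, mem_biUnion, mem_range, mem_wordsOfLen]
  exact ⟨fun ⟨_, hi, hx⟩ => by omega, fun hx => ⟨_, by omega, rfl⟩⟩

def IsPrefixClosed (C : Finset (V b)) : Prop := ∀ x ∈ C, ∀ y, y <+: x → y ∈ C

lemma IsPrefixClosed.nil_mem {C : Finset (V b)} (hC : IsPrefixClosed C) (hne : C.Nonempty) :
    [] ∈ C :=
  let ⟨x, hx⟩ := hne
  hC x hx [] List.nil_prefix

lemma IsPrefixClosed.dropLast_mem {C : Finset (V b)} (hC : IsPrefixClosed C) {x : V b}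
    (hx : x ∈ C) : x.dropLast ∈ C :=
  hC x hx _ x.dropLast_prefix

open Classical in
noncomputable def rootedSubtrees (A : Finset (V b)) : Finset (Finset (V b)) :=
  A.powerset.filter fun C => C.Nonempty ∧ IsPrefixClosed C

lemma mem_rootedSubtrees {A C : Finset (V b)} :
    C ∈ rootedSubtrees A ↔ C ⊆ A ∧ C.Nonempty ∧ IsPrefixClosed C := by
  simp [rootedSubtrees]

lemma rootedSubtrees_mono {A B : Finset (V b)} (h : A ⊆ B) :
    rootedSubtrees A ⊆ rootedSubtrees B := by
  intro C
  simp only [mem_rootedSubtrees]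
  exact fun ⟨hCA, hC⟩ => ⟨hCA.trans h, hC⟩

def children (x : V b) : Finset (V b) := univ.image fun k : Fin b => x ++ [k]

lemma mem_children {x y : V b} : y ∈ children x ↔ ∃ k : Fin b, x ++ [k] = y := by
  simp [children]

lemma card_children (x : V b) : #(children x) = b := by
  rw [children, card_image_of_injective _ fun k k' h => by simpa using h]
  simp

def childBoundary (C : Finset (V b)) : Finset (V b) := C.biUnion children \ C

lemma mem_childBoundary {C : Finset (V b)} {y : V b} :
    y ∈ childBoundary C ↔ (∃ x ∈ C, ∃ k : Fin b, x ++ [k] = y) ∧ y ∉ C := by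
  simp [childBoundary, mem_children]

lemma nil_notMem_childBoundary (C : Finset (V b)) : [] ∉ childBoundary C := by
  simp [mem_childBoundary]

lemma card_childBoundary_add_card {C : Finset (V b)} (hC : IsPrefixClosed C)
    (hne : C.Nonempty) : #(childBoundary C) + #C = b * #C + 1 := by
  have hall : #(C.biUnion children) = b * #C := by
    rw [card_biUnion, sum_congr rfl fun x _ => card_children x, sum_const, smul_eq_mul,
      mul_comm]
    intro x _ y _ hxy
    simp only [Function.onFun, disjoint_left, mem_children]
    rintro z ⟨k, rfl⟩ ⟨k', hk'⟩
    exact hxy (List.append_inj' hk' rfl).1.symm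
  have hinter : C.biUnion children ∩ C = C.erase [] := by
    ext y
    simp only [mem_inter, mem_biUnion, mem_children, mem_erase]
    constructor
    · rintro ⟨⟨x, -, k, rfl⟩, hy⟩
      exact ⟨by simp, hy⟩
    · rintro ⟨hy, hyC⟩
      exact ⟨⟨_, hC.dropLast_mem hyC, _, y.dropLast_append_getLast hy⟩, hyC⟩
  have := card_sdiff_add_card_inter (C.biUnion children) C
  rw [hinter, card_erase_of_mem (hC.nil_mem hne), hall] at this
  have := hne.card_pos
  rw [childBoundary]
  omega

noncomputable def branch (k : Fin b) (C : Finset (V b)) : Finset (V b) :=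
  C.preimage (List.cons k) List.cons_injective.injOn

@[simp]
lemma mem_branch {k : Fin b} {C : Finset (V b)} {t : V b} : t ∈ branch k C ↔ k :: t ∈ C := by
  simp [branch]

lemma branch_mem_insert_rootedSubtrees {ℓ : ℕ} {C : Finset (V b)}
    (hC : C ∈ rootedSubtrees (ball b (ℓ + 1))) (k : Fin b) :
    branch k C ∈ insert ∅ (rootedSubtrees (ball b ℓ)) := by
  obtain ⟨hCA, -, hCpre⟩ := mem_rootedSubtrees.1 hC
  rcases (branch k C).eq_empty_or_nonempty with h | h
  · simp [h]
  refine mem_insert_of_mem (mem_rootedSubtrees.2 ⟨fun t ht => ?_, h, fun t ht s hst => ?_⟩)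
  · simpa [mem_ball] using mem_ball.1 (hCA (mem_branch.1 ht))
  · exact mem_branch.2 (hCpre _ (mem_branch.1 ht) _ ((List.prefix_cons_inj k).2 hst))

lemma card_eq_one_add_sum_card_branch {C : Finset (V b)} (hnil : [] ∈ C) :
    #C = 1 + ∑ k, #(branch k C) := by
  classical
  rw [card_eq_sum_card_fiberwise (f := List.head?) (t := univ) fun _ _ => mem_coe.2 (mem_univ _),
    Fintype.sum_option]
  congr 1
  · rw [card_eq_one]
    exact ⟨[], by ext x; simpa [List.head?_eq_none_iff] using fun h : x = [] => h ▸ hnil⟩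
  · refine sum_congr rfl fun k _ => ?_
    rw [branch, card_preimage]
    congr 1
    ext x
    cases x <;> simp [eq_comm]

lemma injOn_branch (A : Finset (V b)) :
    Set.InjOn (fun C k => branch k C) (rootedSubtrees A : Set (Finset (V b))) := by
  intro C hC D hD hCD
  obtain ⟨-, hCne, hCpre⟩ := mem_rootedSubtrees.1 hC
  obtain ⟨-, hDne, hDpre⟩ := mem_rootedSubtrees.1 hD
  ext x
  cases x with
  | nil => exact iff_of_true (hCpre.nil_mem hCne) (hDpre.nil_mem hDne)
  | cons k t => simpa using congrArg (t ∈ · k) hCD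

lemma sum_rootedSubtrees_ball_pow_le {z : ℝ} (hz : 0 ≤ z) (hzb : (1 + 2 * z) ^ b ≤ 2) (ℓ : ℕ) :
    ∑ C ∈ rootedSubtrees (ball b ℓ), z ^ #C ≤ 2 * z := by
  induction ℓ with
  | zero =>
    have hsub : rootedSubtrees (ball b 0) ⊆ {{[]}} := by
      intro C hC
      obtain ⟨hCA, hne, -⟩ := mem_rootedSubtrees.1 hC
      refine mem_singleton.2 (hne.subset_singleton_iff.1 fun x hx => ?_)
      simpa [mem_ball] using hCA hx
    calc ∑ C ∈ rootedSubtrees (ball b 0), z ^ #C ≤ ∑ C ∈ {{[]}}, z ^ #C :=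
          sum_le_sum_of_subset_of_nonneg hsub fun _ _ _ => by positivity
      _ ≤ 2 * z := by
          rw [sum_singleton, card_singleton, pow_one]
          linarith
  | succ ℓ ih =>
    -- A rooted subtree of `T_{ℓ+1}` is the root together with its `b` branches, each of them
    -- empty or a rooted subtree of `T_ℓ`: the generating functions satisfy `F_{ℓ+1} ≤ z(1+F_ℓ)^b`.
    set S := insert ∅ (rootedSubtrees (ball b ℓ))
    have hS : ∑ D ∈ S, z ^ #D ≤ 1 + 2 * z := by
      rw [sum_insert fun h => by simpa using (mem_rootedSubtrees.1 h).2.1]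
      simpa using ih
    calc ∑ C ∈ rootedSubtrees (ball b (ℓ + 1)), z ^ #C
        = ∑ C ∈ rootedSubtrees (ball b (ℓ + 1)), z * ∏ k, z ^ #(branch k C) := by
          refine sum_congr rfl fun C hC => ?_
          obtain ⟨-, hne, hpre⟩ := mem_rootedSubtrees.1 hC
          rw [card_eq_one_add_sum_card_branch (hpre.nil_mem hne), pow_add, pow_one,
            prod_pow_eq_pow_sum]
      _ = ∑ f ∈ (rootedSubtrees (ball b (ℓ + 1))).image (fun C k => branch k C),
            z * ∏ k, z ^ #(f k) := by
          rw [sum_image (injOn_branch _)]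
      _ ≤ ∑ f ∈ Fintype.piFinset fun _ => S, z * ∏ k, z ^ #(f k) := by
          refine sum_le_sum_of_subset_of_nonneg ?_ fun _ _ _ => by positivity
          intro f hf
          obtain ⟨C, hC, rfl⟩ := mem_image.1 hf
          exact Fintype.mem_piFinset.2 (branch_mem_insert_rootedSubtrees hC)
      _ = z * (∑ D ∈ S, z ^ #D) ^ b := by
          rw [← mul_sum, ← prod_univ_sum (fun _ => S) fun _ D => z ^ #D, prod_const, card_univ,
            Fintype.card_fin]
      _ ≤ z * (1 + 2 * z) ^ b := by gcongr
      _ ≤ 2 * z := by nlinarith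

lemma mem_region {ℓ : ℕ} {ω : V b → Bool} {x : V b} :
    x ∈ region b ℓ ω ↔ x.length ≤ ℓ ∧ ∀ y, y <+: x → ω y = true := by
  simp only [region, mem_filter, mem_ball, inT, List.all_eq_true, List.mem_range]
  refine and_congr_right fun _ => ⟨fun h y hy => ?_, fun h k _ => h _ (x.take_prefix k)⟩
  rw [List.prefix_iff_eq_take.1 hy]
  exact h _ (Nat.lt_succ_of_le hy.length_le)

lemma isPrefixClosed_region (ℓ : ℕ) (ω : V b → Bool) : IsPrefixClosed (region b ℓ ω) := by
  intro x hx y hy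
  rw [mem_region] at hx ⊢
  exact ⟨hy.length_le.trans hx.1, fun z hz => hx.2 z (hz.trans hy)⟩

lemma region_subset_ball (ℓ : ℕ) (ω : V b → Bool) : region b ℓ ω ⊆ ball b ℓ :=
  filter_subset _ _

lemma nil_mem_region {ℓ : ℕ} {ω : V b → Bool} (hω : ω [] = true) : [] ∈ region b ℓ ω :=
  mem_region.2 ⟨Nat.zero_le _, fun _ hy => List.prefix_nil.1 hy ▸ hω⟩

open Classical in
noncomputable def minusCluster (A : Finset (V b)) (c : V b → Bool) : Finset (V b) :=
  A.filter fun x => ∀ y, y <+: x → c y = false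

section minusCluster

variable {A : Finset (V b)} {c : V b → Bool}

lemma mem_minusCluster {x : V b} :
    x ∈ minusCluster A c ↔ x ∈ A ∧ ∀ y, y <+: x → c y = false := by
  classical
  simp [minusCluster]

lemma minusCluster_subset : minusCluster A c ⊆ A := fun _ hx => (mem_minusCluster.1 hx).1

lemma eq_false_of_mem_minusCluster {x : V b} (hx : x ∈ minusCluster A c) : c x = false :=
  (mem_minusCluster.1 hx).2 x List.prefix_rfl

lemma nil_mem_minusCluster (h0 : [] ∈ A) (hc : c [] = false) : [] ∈ minusCluster A c :=
  mem_minusCluster.2 ⟨h0, fun _ hy => List.prefix_nil.1 hy ▸ hc⟩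

lemma isPrefixClosed_minusCluster (hA : IsPrefixClosed A) :
    IsPrefixClosed (minusCluster A c) := by
  intro x hx y hy
  rw [mem_minusCluster] at hx ⊢
  exact ⟨hA x hx.1 y hy, fun z hz => hx.2 z (hz.trans hy)⟩

lemma append_singleton_mem_minusCluster {x : V b} {k : Fin b} (hx : x ∈ minusCluster A c)
    (hxk : x ++ [k] ∈ A) (hc : c (x ++ [k]) = false) : x ++ [k] ∈ minusCluster A c := by
  refine mem_minusCluster.2 ⟨hxk, fun y hy => ?_⟩
  rcases List.prefix_concat_iff.1 hy with rfl | hy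
  · exact hc
  · exact (mem_minusCluster.1 hx).2 y hy

end minusCluster

def flipOn {A : Finset (V b)} (C : Finset (V b)) (σ : {x // x ∈ A} → Bool) :
    {x // x ∈ A} → Bool :=
  fun x => if (x : V b) ∈ C then !σ x else σ x

lemma flipOn_involutive {A : Finset (V b)} (C : Finset (V b)) :
    Function.Involutive (flipOn (A := A) C) := by
  intro σ
  funext x
  by_cases hx : (x : V b) ∈ C <;> simp [flipOn, hx]

lemma glue_flipOn {A C : Finset (V b)} (hCA : C ⊆ A) (ω : V b → Bool)
    (σ : {x // x ∈ A} → Bool) (x : V b) :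
    glue b A ω (flipOn C σ) x = if x ∈ C then !glue b A ω σ x else glue b A ω σ x := by
  by_cases hx : x ∈ C
  · simp [glue, flipOn, hx, hCA hx]
  · by_cases hxA : x ∈ A <;> simp [glue, flipOn, hx, hxA]

lemma append_singleton_mem_childBoundary {C : Finset (V b)} {x : V b}
    {k : Fin b} : x ++ [k] ∈ childBoundary C ↔ x ∈ C ∧ x ++ [k] ∉ C := by
  rw [mem_childBoundary]
  refine and_congr_left fun hxk => ⟨?_, fun hx => ⟨x, hx, k, rfl⟩⟩
  rintro ⟨x', hx', k', h⟩
  rwa [← (List.append_inj' h rfl).1]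

lemma childBoundary_subset_edges {A C : Finset (V b)} (hCA : C ⊆ A) :
    childBoundary C ⊆ (A ∪ bdry b A).filter
      (fun y => y ≠ [] ∧ y ≠ [] ∧ y.dropLast ∈ A ∪ bdry b A) := by
  intro y hy
  obtain ⟨⟨x, hxC, k, rfl⟩, -⟩ := mem_childBoundary.1 hy
  have hxA := hCA hxC
  have hxk : x ++ [k] ∈ A ∪ bdry b A := by
    rw [bdry, union_sdiff_self_eq_union]
    exact mem_union_right _ (mem_biUnion.2 ⟨x, hxA, by simp [nbrs]⟩)
  simp [hxk, hxA]

/-- Flipping a minus region `C` changes the energy only through the edges leaving `C`,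
which all point to children in `childBoundary C` because `C` is prefix closed. -/
lemma energy_glue_flipOn {A C : Finset (V b)} (hCA : C ⊆ A) (hC : IsPrefixClosed C)
    (β h : ℝ) (ω : V b → Bool) (σ : {x // x ∈ A} → Bool)
    (hminus : ∀ x ∈ C, glue b A ω σ x = false) :
    energy b β h A [] (glue b A ω (flipOn C σ)) =
      energy b β h A [] (glue b A ω σ) +
        2 * β * (∑ y ∈ childBoundary C, spin (glue b A ω σ y) + h * #C) := by
  have hflip := glue_flipOn hCA ω σ
  have hedge : ∀ y : V b, y ≠ [] →
      spin (glue b A ω (flipOn C σ) y.dropLast) * spin (glue b A ω (flipOn C σ) y) =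
        spin (glue b A ω σ y.dropLast) * spin (glue b A ω σ y) +
          if y ∈ childBoundary C then 2 * spin (glue b A ω σ y) else 0 := by
    intro y hy
    obtain ⟨x, k, rfl⟩ : ∃ x k, y = x ++ [k] := ⟨_, _, (y.dropLast_append_getLast hy).symm⟩
    simp only [List.dropLast_concat, hflip, append_singleton_mem_childBoundary]
    by_cases hxk : x ++ [k] ∈ C
    · have hx : x ∈ C := hC _ hxk _ (List.prefix_append _ _)
      simp [hx, hxk, hminus, spin]
    · by_cases hx : x ∈ C
      · cases glue b A ω σ (x ++ [k]) <;> norm_num [hx, hxk, hminus, spin]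
      · simp [hx, hxk]
  have hfield : ∀ x : V b,
      spin (glue b A ω (flipOn C σ) x) = spin (glue b A ω σ x) + if x ∈ C then 2 else 0 := by
    intro x
    by_cases hx : x ∈ C
    · norm_num [hflip, hx, hminus, spin]
    · simp [hflip, hx]
  simp only [energy]
  rw [sum_congr rfl fun y hy => hedge y (mem_filter.1 hy).2.1, sum_add_distrib, sum_ite_mem,
    inter_eq_right.2 (childBoundary_subset_edges hCA), sum_congr rfl fun x _ => hfield x,
    sum_add_distrib, sum_ite_mem, inter_eq_right.2 hCA, ← mul_sum, sum_const, nsmul_eq_mul]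
  ring

lemma glue_eq_true_of_mem_childBoundary_minusCluster {A : Finset (V b)} {ω : V b → Bool}
    {σ : {x // x ∈ A} → Bool} {y : V b}
    (hy : y ∈ childBoundary (minusCluster A (glue b A ω σ))) (hωy : ω y = true) :
    glue b A ω σ y = true := by
  obtain ⟨⟨x, hx, k, rfl⟩, hyC⟩ := mem_childBoundary.1 hy
  by_cases hxk : x ++ [k] ∈ A
  · by_contra hc
    exact hyC (append_singleton_mem_minusCluster hx hxk (by simpa using hc))
  · simpa [glue, hxk] using hωy

lemma card_sub_two_mul_card_obstacles_le_sum_spin {A : Finset (V b)} (ω : V b → Bool)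
    (σ : {x // x ∈ A} → Bool) :
    let D := childBoundary (minusCluster A (glue b A ω σ))
    (#D : ℝ) - 2 * #{y ∈ D | ω y = false} ≤ ∑ y ∈ D, spin (glue b A ω σ y) := by
  intro D
  calc (#D : ℝ) - 2 * #{y ∈ D | ω y = false}
      = ∑ y ∈ D, (1 - 2 * if ω y = false then 1 else 0 : ℝ) := by
        rw [sum_sub_distrib, ← mul_sum, sum_boole]
        simp
    _ ≤ ∑ y ∈ D, spin (glue b A ω σ y) := by
        refine sum_le_sum fun y hy => ?_
        cases hωy : ω y
        · cases glue b A ω σ y <;> norm_num [spin]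
        · simp [glue_eq_true_of_mem_childBoundary_minusCluster hy hωy, spin]

def SparseObstacles (a : ℝ) (A : Finset (V b)) (ω : V b → Bool) : Prop :=
  ∀ C ∈ rootedSubtrees A, 4 * (#{y ∈ childBoundary C | ω y = false} : ℝ) ≤ a * #C

lemma SparseObstacles.mono {a : ℝ} {A B : Finset (V b)} {ω : V b → Bool} (hAB : A ⊆ B)
    (hB : SparseObstacles a B ω) : SparseObstacles a A ω :=
  fun C hC => hB C (rootedSubtrees_mono hAB hC)

/-- Each vertex of `C` brings `b - 1` outer children, which beat the field `h ≥ -(b - 1) + a`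
by `a`; sparse obstacles cost at most half of that. -/
lemma energy_add_le_energy_glue_flipOn_minusCluster {a β h : ℝ} {A : Finset (V b)}
    {ω : V b → Bool} (hA : IsPrefixClosed A) (h0 : [] ∈ A) (hβ : 0 ≤ β)
    (hh : -((b : ℝ) - 1) + a ≤ h) (hsparse : SparseObstacles a A ω) (σ : {x // x ∈ A} → Bool)
    (hroot : glue b A ω σ [] = false) :
    energy b β h A [] (glue b A ω σ) + β * (2 + a * #(minusCluster A (glue b A ω σ))) ≤
      energy b β h A [] (glue b A ω (flipOn (minusCluster A (glue b A ω σ)) σ)) := by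
  set C := minusCluster A (glue b A ω σ)
  have hCpre : IsPrefixClosed C := isPrefixClosed_minusCluster hA
  have hCne : C.Nonempty := ⟨_, nil_mem_minusCluster h0 hroot⟩
  rw [energy_glue_flipOn minusCluster_subset hCpre β h ω σ
    fun _ hx => eq_false_of_mem_minusCluster hx]
  have hcard : (#(childBoundary C) : ℝ) + #C = b * #C + 1 := by
    exact_mod_cast card_childBoundary_add_card hCpre hCne
  have hspin := card_sub_two_mul_card_obstacles_le_sum_spin ω σ
  have hsp := hsparse C (mem_rootedSubtrees.2 ⟨minusCluster_subset, hCne, hCpre⟩)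
  have hfield := mul_le_mul_of_nonneg_right hh (Nat.cast_nonneg (α := ℝ) #C)
  have hgain : 2 + a * #C ≤ 2 * (∑ y ∈ childBoundary C, spin (glue b A ω σ y) + h * #C) := by
    linarith
  nlinarith

lemma sum_le_sum_mul_sum_of_injective_fibers {α ι : Type*} [DecidableEq ι] {s t : Finset α}
    {I : Finset ι} {κ : α → ι} (hκ : ∀ x ∈ s, κ x ∈ I) {φ : ι → α → α}
    (hφ : ∀ i, Function.Injective (φ i)) (hφt : ∀ x ∈ s, φ (κ x) x ∈ t) {W : α → ℝ}
    (hW : ∀ x, 0 ≤ W x) {g : ι → ℝ} (hg : ∀ i ∈ I, 0 ≤ g i)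
    (hWg : ∀ x ∈ s, W x ≤ g (κ x) * W (φ (κ x) x)) :
    ∑ x ∈ s, W x ≤ (∑ i ∈ I, g i) * ∑ y ∈ t, W y := by
  classical
  calc ∑ x ∈ s, W x = ∑ i ∈ I, ∑ x ∈ s with κ x = i, W x := (sum_fiberwise_of_maps_to hκ W).symm
    _ ≤ ∑ i ∈ I, ∑ x ∈ s with κ x = i, g i * W (φ i x) := by
        refine sum_le_sum fun i _ => sum_le_sum fun x hx => ?_
        obtain ⟨hxs, rfl⟩ := mem_filter.1 hx
        exact hWg x hxs
    _ = ∑ i ∈ I, g i * ∑ y ∈ (s.filter (κ · = i)).image (φ i), W y := by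
        simp_rw [mul_sum, sum_image (hφ _).injOn]
    _ ≤ ∑ i ∈ I, g i * ∑ y ∈ t, W y := by
        refine sum_le_sum fun i hi => mul_le_mul_of_nonneg_left
          (sum_le_sum_of_subset_of_nonneg ?_ fun y _ _ => hW y) (hg i hi)
        intro y hy
        obtain ⟨x, hx, rfl⟩ := mem_image.1 hy
        obtain ⟨hxs, rfl⟩ := mem_filter.1 hx
        exact hφt x hxs
    _ = (∑ i ∈ I, g i) * ∑ y ∈ t, W y := (sum_mul _ _ _).symm

lemma sum_exp_energy_minus_le {a β h : ℝ} {A : Finset (V b)} {ω : V b → Bool}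
    (hA : IsPrefixClosed A) (h0 : [] ∈ A) (hβ : 0 ≤ β) (hh : -((b : ℝ) - 1) + a ≤ h)
    (hsparse : SparseObstacles a A ω) :
    ∑ σ with glue b A ω σ [] = false, Real.exp (energy b β h A [] (glue b A ω σ)) ≤
      (∑ C ∈ rootedSubtrees A, Real.exp (-(β * (2 + a * #C)))) *
        ∑ σ with glue b A ω σ [] = true, Real.exp (energy b β h A [] (glue b A ω σ)) := by
  refine sum_le_sum_mul_sum_of_injective_fibers (κ := fun σ => minusCluster A (glue b A ω σ))
    (φ := flipOn) ?_ (fun C => (flipOn_involutive C).injective) ?_ (fun _ => (Real.exp_pos _).le)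
    (fun _ _ => (Real.exp_pos _).le) ?_
  · intro σ hσ
    exact mem_rootedSubtrees.2 ⟨minusCluster_subset,
      ⟨_, nil_mem_minusCluster h0 (mem_filter.1 hσ).2⟩, isPrefixClosed_minusCluster hA⟩
  · intro σ hσ
    have hnil := nil_mem_minusCluster h0 (mem_filter.1 hσ).2
    simpa [glue_flipOn minusCluster_subset, hnil] using eq_false_of_mem_minusCluster hnil
  · intro σ hσ
    rw [← Real.exp_add, Real.exp_le_exp]
    linarith [energy_add_le_energy_glue_flipOn_minusCluster hA h0 hβ hh hsparse σ
      (mem_filter.1 hσ).2]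

lemma one_add_two_mul_pow_le_two {z : ℝ} (hz : 0 ≤ z) (hbz : 4 * (b + 1) * z ≤ 1) :
    (1 + 2 * z) ^ b ≤ 2 := by
  have hexp : Real.exp (1 / 2) ≤ 2 := by
    have hsq : Real.exp (1 / 2) ^ 2 = Real.exp 1 := by
      rw [← Real.exp_nat_mul]
      norm_num
    nlinarith [Real.exp_pos (1 / 2), Real.exp_one_lt_d9]
  calc (1 + 2 * z) ^ b ≤ Real.exp (2 * z) ^ b := by
        gcongr
        linarith [Real.add_one_le_exp (2 * z)]
    _ = Real.exp (b * (2 * z)) := (Real.exp_nat_mul _ _).symm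
    _ ≤ Real.exp (1 / 2) := Real.exp_le_exp.2 (by nlinarith)
    _ ≤ 2 := hexp

lemma sum_rootedSubtrees_exp_le {a β : ℝ} {A : Finset (V b)} {ℓ : ℕ} (hA : A ⊆ ball b ℓ)
    (hq : 4 * (b + 1) * Real.exp (-(β * a)) ≤ 1) :
    ∑ C ∈ rootedSubtrees A, Real.exp (-(β * (2 + a * #C))) ≤ Real.exp (-(2 * β)) := by
  set q := Real.exp (-(β * a))
  have hq0 : 0 ≤ q := (Real.exp_pos _).le
  have hterm : ∀ n : ℕ, Real.exp (-(β * (2 + a * n))) = Real.exp (-(2 * β)) * q ^ n := by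
    intro n
    rw [← Real.exp_nat_mul, ← Real.exp_add]
    ring_nf
  calc ∑ C ∈ rootedSubtrees A, Real.exp (-(β * (2 + a * #C)))
      = Real.exp (-(2 * β)) * ∑ C ∈ rootedSubtrees A, q ^ #C := by
        simp_rw [hterm, mul_sum]
    _ ≤ Real.exp (-(2 * β)) * ∑ C ∈ rootedSubtrees (ball b ℓ), q ^ #C := by
        gcongr
        exact rootedSubtrees_mono hA
    _ ≤ Real.exp (-(2 * β)) * (2 * q) := by
        gcongr
        exact sum_rootedSubtrees_ball_pow_le hq0 (one_add_two_mul_pow_le_two hq0 hq) ℓ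
    _ ≤ Real.exp (-(2 * β)) := by
        have : 2 * q ≤ 1 := by nlinarith [(Nat.cast_nonneg b : (0 : ℝ) ≤ b)]
        nlinarith [Real.exp_pos (-(2 * β))]

lemma RfinE_le_of_sparseObstacles {a β h : ℝ} {ℓ : ℕ} {ω : V b → Bool} (hroot : ω [] = true)
    (hβ : 0 ≤ β) (hq : 4 * (b + 1) * Real.exp (-(β * a)) ≤ 1) (hh : -((b : ℝ) - 1) + a ≤ h)
    (hsparse : SparseObstacles a (ball b ℓ) ω) :
    RfinE b β h ℓ ω ≤ ENNReal.ofReal (Real.exp (-(2 * β))) := by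
  rw [RfinE, if_pos hroot]
  refine ENNReal.ofReal_le_ofReal ?_
  set A := region b ℓ ω
  set W : ({x // x ∈ A} → Bool) → ℝ := fun σ => Real.exp (energy b β h A [] (glue b A ω σ))
  have h0 : [] ∈ A := nil_mem_region hroot
  have hgibbs : ∀ s : Bool, gibbsExp b β h A [] ω (fun c => if c [] = s then 1 else 0) =
      (∑ σ with glue b A ω σ [] = s, W σ) / ∑ σ, W σ := by
    intro s
    simp only [gibbsExp, sum_filter, mul_ite, mul_one, mul_zero, W]
  have hplus : 0 < ∑ σ with glue b A ω σ [] = true, W σ :=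
    sum_pos (fun _ _ => Real.exp_pos _) ⟨fun _ => true, by simp [glue, h0]⟩
  rw [hgibbs, hgibbs, div_div_div_cancel_right₀ (sum_pos (fun _ _ => Real.exp_pos _)
    univ_nonempty).ne', div_le_iff₀ hplus]
  calc ∑ σ with glue b A ω σ [] = false, W σ
      ≤ (∑ C ∈ rootedSubtrees A, Real.exp (-(β * (2 + a * #C)))) *
          ∑ σ with glue b A ω σ [] = true, W σ :=
        sum_exp_energy_minus_le (isPrefixClosed_region ℓ ω) h0 hβ hh
          (hsparse.mono (region_subset_ball ℓ ω))
    _ ≤ Real.exp (-(2 * β)) * ∑ σ with glue b A ω σ [] = true, W σ := by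
        gcongr
        exact sum_rootedSubtrees_exp_le (region_subset_ball ℓ ω) hq

lemma setOf_lt_RfinE_subset {a β h : ℝ} {ℓ : ℕ} (hβ : 0 ≤ β)
    (hq : 4 * (b + 1) * Real.exp (-(β * a)) ≤ 1) (hh : -((b : ℝ) - 1) + a ≤ h) :
    {ω | ENNReal.ofReal (Real.exp (-(2 * β))) < RfinE b β h ℓ ω} ⊆
      {ω | ¬SparseObstacles a (ball b ℓ) ω} ∪ {ω | ω [] = false} := by
  intro ω hω
  by_contra hgood
  simp only [Set.mem_union, Set.mem_ofPred_eq, not_or, not_not, Bool.not_eq_false] at hgood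
  exact (RfinE_le_of_sparseObstacles hgood.2 hβ hq hh hgood.1).not_gt hω

section Environment

variable {p : ℝ} {P : Measure (V b → Bool)}

lemma IsBernoulliProductRoot.measure_root_obstacle (hP : IsBernoulliProductRoot b p P) :
    P {ω | ω [] = false} = 0 := by
  have := hP.1
  have hfree : P {ω | ω [] = true} = 1 := by simpa using hP.2 ∅ (fun _ => true) (by simp)
  have hmeas : MeasurableSet {ω : V b → Bool | ω [] = true} :=
    measurableSet_eq_fun (measurable_pi_apply []) measurable_const
  have hcompl : {ω : V b → Bool | ω [] = false} = {ω | ω [] = true}ᶜ := by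
    ext
    simp
  rw [hcompl, prob_compl_eq_one_sub hmeas, hfree, tsub_self]

lemma IsBernoulliProductRoot.measure_forall_obstacle_le (hP : IsBernoulliProductRoot b p P)
    (hp : p ≤ 1) {F : Finset (V b)} (hF : [] ∉ F) :
    P {ω | ∀ x ∈ F, ω x = false} ≤ ENNReal.ofReal ((1 - p) ^ #F) := by
  calc P {ω | ∀ x ∈ F, ω x = false}
      ≤ P ({ω | ω [] = true ∧ ∀ x ∈ F, ω x = (fun _ => false) x} ∪ {ω | ω [] = false}) :=
        measure_mono fun ω hω => by cases h : ω [] <;> simp_all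
    _ ≤ P {ω | ω [] = true ∧ ∀ x ∈ F, ω x = (fun _ => false) x} + P {ω | ω [] = false} :=
        measure_union_le _ _
    _ = ENNReal.ofReal ((1 - p) ^ #F) := by
        rw [hP.2 F _ hF, hP.measure_root_obstacle, add_zero, ENNReal.ofReal_pow (by linarith)]
        simp

lemma IsBernoulliProductRoot.measure_card_obstacles_gt_le (hP : IsBernoulliProductRoot b p P)
    (hp0 : 0 ≤ p) (hp1 : p < 1) (a : ℝ) {C : Finset (V b)} (hCne : C.Nonempty)
    (hC : IsPrefixClosed C) :
    P {ω | a * #C < 4 * (#{y ∈ childBoundary C | ω y = false} : ℝ)} ≤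
      ENNReal.ofReal ((2 ^ b * (1 - p) ^ (a / 4)) ^ #C) := by
  set D := childBoundary C
  set S := D.powerset.filter fun O => a * #C < 4 * (#O : ℝ)
  have hsub : {ω : V b → Bool | a * #C < 4 * (#{y ∈ D | ω y = false} : ℝ)} ⊆
      ⋃ O ∈ S, {ω | ∀ x ∈ O, ω x = false} := fun ω hω =>
    Set.mem_iUnion₂.2 ⟨_, mem_filter.2 ⟨mem_powerset.2 (filter_subset _ _), hω⟩,
      fun _ hx => (mem_filter.1 hx).2⟩
  have hterm : ∀ O ∈ S, P {ω | ∀ x ∈ O, ω x = false} ≤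
      ENNReal.ofReal ((1 - p) ^ (a * #C / 4)) := by
    intro O hO
    obtain ⟨hOD, hOcard⟩ := mem_filter.1 hO
    refine (hP.measure_forall_obstacle_le hp1.le
      fun h => nil_notMem_childBoundary C (mem_powerset.1 hOD h)).trans
      (ENNReal.ofReal_le_ofReal ?_)
    rw [← Real.rpow_natCast]
    exact Real.rpow_le_rpow_of_exponent_ge (by linarith) (by linarith) (by linarith)
  have hS : (#S : ℝ) ≤ 2 ^ (b * #C) := by
    have hD : #D + #C = b * #C + 1 := card_childBoundary_add_card hC hCne
    have := hCne.card_pos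
    calc (#S : ℝ) ≤ #D.powerset := by exact_mod_cast card_filter_le _ _
      _ = 2 ^ #D := by rw [card_powerset]; push_cast; rfl
      _ ≤ 2 ^ (b * #C) := pow_le_pow_right₀ one_le_two (by omega)
  calc P {ω : V b → Bool | a * #C < 4 * (#{y ∈ D | ω y = false} : ℝ)}
      ≤ ∑ O ∈ S, P {ω | ∀ x ∈ O, ω x = false} :=
        (measure_mono hsub).trans (measure_biUnion_finset_le _ _)
    _ ≤ ∑ O ∈ S, ENNReal.ofReal ((1 - p) ^ (a * #C / 4)) := sum_le_sum hterm
    _ = ENNReal.ofReal (#S * (1 - p) ^ (a * #C / 4)) := by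
        rw [sum_const, nsmul_eq_mul, ENNReal.ofReal_mul (by positivity), ENNReal.ofReal_natCast]
    _ ≤ ENNReal.ofReal ((2 ^ b * (1 - p) ^ (a / 4)) ^ #C) := by
        refine ENNReal.ofReal_le_ofReal ?_
        rw [mul_pow, ← pow_mul, ← Real.rpow_mul_natCast (by linarith),
          show a / 4 * #C = a * #C / 4 by ring]
        gcongr

lemma IsBernoulliProductRoot.measure_not_sparseObstacles_le (hP : IsBernoulliProductRoot b p P)
    (hp0 : 0 ≤ p) (hp1 : p < 1) {a : ℝ} (hz : 4 * (b + 1) * (2 ^ b * (1 - p) ^ (a / 4)) ≤ 1)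
    (ℓ : ℕ) :
    P {ω | ¬SparseObstacles a (ball b ℓ) ω} ≤ ENNReal.ofReal (2 * (2 ^ b * (1 - p) ^ (a / 4))) := by
  set z : ℝ := 2 ^ b * (1 - p) ^ (a / 4)
  have hz0 : 0 ≤ z := by positivity
  have hsub : {ω | ¬SparseObstacles a (ball b ℓ) ω} ⊆ ⋃ C ∈ rootedSubtrees (ball b ℓ),
      {ω | a * #C < 4 * (#{y ∈ childBoundary C | ω y = false} : ℝ)} := by
    intro ω hω
    simp only [SparseObstacles, not_forall, not_le, Set.mem_ofPred_eq] at hω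
    obtain ⟨C, hC, hlt⟩ := hω
    exact Set.mem_iUnion₂.2 ⟨C, hC, hlt⟩
  calc P {ω | ¬SparseObstacles a (ball b ℓ) ω}
      ≤ ∑ C ∈ rootedSubtrees (ball b ℓ),
          P {ω | a * #C < 4 * (#{y ∈ childBoundary C | ω y = false} : ℝ)} :=
        (measure_mono hsub).trans (measure_biUnion_finset_le _ _)
    _ ≤ ∑ C ∈ rootedSubtrees (ball b ℓ), ENNReal.ofReal (z ^ #C) := by
        refine sum_le_sum fun C hC => ?_
        obtain ⟨-, hne, hpre⟩ := mem_rootedSubtrees.1 hC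
        exact hP.measure_card_obstacles_gt_le hp0 hp1 a hne hpre
    _ = ENNReal.ofReal (∑ C ∈ rootedSubtrees (ball b ℓ), z ^ #C) :=
        (ENNReal.ofReal_sum_of_nonneg fun _ _ => by positivity).symm
    _ ≤ ENNReal.ofReal (2 * z) := ENNReal.ofReal_le_ofReal
        (sum_rootedSubtrees_ball_pow_le hz0 (one_add_two_mul_pow_le_two hz0 hz) ℓ)

end Environment

lemma four_mul_succ_mul_exp_neg_le_one {a β : ℝ} (ha : 0 < a)
    (hβ : Real.log (4 * (b + 1)) / a ≤ β) : 4 * (b + 1) * Real.exp (-(β * a)) ≤ 1 := by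
  have hpos : (0 : ℝ) < 4 * (b + 1) := by positivity
  have hlog : Real.log (4 * (b + 1)) ≤ β * a := (div_le_iff₀ ha).1 hβ
  calc 4 * (b + 1) * Real.exp (-(β * a)) ≤ 4 * (b + 1) * Real.exp (-Real.log (4 * (b + 1))) := by
        gcongr
    _ = 1 := by rw [Real.exp_neg, Real.exp_log hpos, mul_inv_cancel₀ hpos.ne']

lemma two_pow_mul_rpow_le {a κ ε : ℝ} (ha : 0 < a) (hκ : 0 ≤ κ) (hε0 : 0 ≤ ε)
    (hε : ε ≤ (κ / 2 ^ b) ^ (a / 4)⁻¹) : 2 ^ b * ε ^ (a / 4) ≤ κ := by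
  have h := (Real.le_rpow_inv_iff_of_pos hε0 (by positivity) (by positivity)).1 hε
  calc 2 ^ b * ε ^ (a / 4) ≤ 2 ^ b * (κ / 2 ^ b) := by gcongr
    _ = κ := by field_simp

end

theorem stmt1_general (δ : ℝ) (hδ : 0 < δ) (a : ℝ) (ha : 0 < a) (b : ℕ) :
    ∃ p₀ : ℝ, 0 ≤ p₀ ∧ p₀ < 1 ∧ ∃ β₀ : ℝ,
      ∀ p : ℝ, p₀ ≤ p → p < 1 → ∀ β : ℝ, β₀ ≤ β →
        ∀ h : ℝ, -((b : ℝ) - 1) + a ≤ h → ∀ ℓ : ℕ, 1 ≤ ℓ →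
          ∀ P : Measure (V b → Bool), IsBernoulliProductRoot b p P →
            P {ω | ENNReal.ofReal (Real.exp (-(2 * β))) < RfinE b β h ℓ ω} ≤
              ENNReal.ofReal δ := by
  -- `κ` caps `z = 2^b (1-p)^{a/4}`, which must satisfy `2z ≤ δ` and `4(b+1)z ≤ 1`.
  set κ : ℝ := min (δ / 2) (1 / (4 * (b + 1)))
  have hκ : 0 < κ := lt_min (by positivity) (by positivity)
  set ε₀ : ℝ := (κ / 2 ^ b) ^ (a / 4)⁻¹
  have hε₀ : 0 < ε₀ := by positivity
  refine ⟨max 0 (1 - ε₀), le_max_left _ _, max_lt one_pos (by linarith),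
    Real.log (4 * (b + 1)) / a, fun p hp₀ hp1 β hβ h hh ℓ _ P hP => ?_⟩
  have hp0 : 0 ≤ p := (le_max_left _ _).trans hp₀
  have hz := two_pow_mul_rpow_le (ε := 1 - p) ha hκ.le (by linarith)
    (sub_le_comm.1 ((le_max_right _ _).trans hp₀))
  have hβ0 : 0 ≤ β :=
    (div_nonneg (Real.log_nonneg (by linarith [b.cast_nonneg (α := ℝ)])) ha.le).trans hβ
  calc P {ω | ENNReal.ofReal (Real.exp (-(2 * β))) < RfinE b β h ℓ ω}
      ≤ P {ω | ¬SparseObstacles a (ball b ℓ) ω} + P {ω | ω [] = false} :=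
        (measure_mono (setOf_lt_RfinE_subset hβ0 (four_mul_succ_mul_exp_neg_le_one ha hβ) hh)).trans
          (measure_union_le _ _)
    _ ≤ ENNReal.ofReal (2 * (2 ^ b * (1 - p) ^ (a / 4))) + 0 :=
        add_le_add (hP.measure_not_sparseObstacles_le hp0 hp1
          ((le_div_iff₀' (by positivity)).1 (hz.trans (min_le_right _ _))) ℓ)
          hP.measure_root_obstacle.le
    _ ≤ ENNReal.ofReal δ := by
        have hzδ : 2 ^ b * (1 - p) ^ (a / 4) ≤ δ / 2 := hz.trans (min_le_left _ _)
        rw [add_zero]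
        exact ENNReal.ofReal_le_ofReal (by linarith)

/-- for every `δ > 0`, `a > 0`, `b ≥ 2` there are `p₀ < 1`, `β₀ < ∞` such that
for all `p ∈ [p₀,1)`, `β ≥ β₀`, `h ≥ -(b-1)+a` and every `ℓ ≥ 1`,
`ℙ(R^ℓ(ω) > e^{-2β}) ≤ δ`, the environment being `ω_r = +1` fixed and i.i.d. Bernoulli(p)
elsewhere. -/
theorem stmt1 (δ : ℝ) (hδ : 0 < δ) (a : ℝ) (ha : 0 < a) (b : ℕ) (hb : 2 ≤ b) :
    ∃ p₀ : ℝ, 0 ≤ p₀ ∧ p₀ < 1 ∧ ∃ β₀ : ℝ,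
      ∀ p : ℝ, p₀ ≤ p → p < 1 → ∀ β : ℝ, β₀ ≤ β →
        ∀ h : ℝ, -((b : ℝ) - 1) + a ≤ h → ∀ ℓ : ℕ, 1 ≤ ℓ →
          ∀ P : Measure (V b → Bool), IsBernoulliProductRoot b p P →
            P {ω | ENNReal.ofReal (Real.exp (-(2 * β))) < RfinE b β h ℓ ω} ≤
              ENNReal.ofReal δ :=
  stmt1_general δ hδ a ha b

end Paper
end

section
/- For every a > 0 there exists b₀ ∈ ℕ such that for every integer b ≥ b₀ the following holds: if (q_ℓ)_{ℓ ≥ 1} are nonnegative real numbers satisfying q_1 ≤ e^{−ab} and q_{ℓ+1} ≤ e^{−ab} + Σ_{n=2}^{b} binom(b,n) q_ℓ^n for every ℓ ≥ 1, then q_ℓ ≤ e^{−ab/2} for every ℓ ≥ 1. -/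
/-!
Write `E = e^{-ab/2}`, so that `e^{-ab} = E²`. As long as `q_ℓ ≤ E` and `bE ≤ 1`, every term of
`Σ_{n=2}^b C(b,n) q_ℓⁿ` is at most `(bE)ⁿ ≤ (bE)²`, so `q_{ℓ+1} ≤ E² + b³E² = (1 + b³)E² ≤ E`
once `(1 + b³)E ≤ 1`, which holds for large `b` because `E` decays exponentially in `b`.
-/

namespace Paper

open Filter Finset Real

theorem sum_Icc_two_choose_mul_pow_le {b : ℕ} {x : ℝ} (hx : 0 ≤ x) (hbx : b * x ≤ 1) :
    ∑ n ∈ Icc 2 b, (b.choose n : ℝ) * x ^ n ≤ b * (b * x) ^ 2 := by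
  have hterm : ∀ n ∈ Icc 2 b, (b.choose n : ℝ) * x ^ n ≤ (b * x) ^ 2 := by
    intro n hn
    calc (b.choose n : ℝ) * x ^ n ≤ (b : ℝ) ^ n * x ^ n := by
          gcongr
          exact_mod_cast Nat.choose_le_pow b n
      _ = (b * x) ^ n := (mul_pow _ _ _).symm
      _ ≤ (b * x) ^ 2 := pow_le_pow_of_le_one (by positivity) hbx (mem_Icc.1 hn).1
  have hcard : ((Icc 2 b).card : ℝ) ≤ b := by
    rw [Nat.card_Icc]
    exact_mod_cast Nat.sub_le_of_le_add (by omega)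
  calc ∑ n ∈ Icc 2 b, (b.choose n : ℝ) * x ^ n ≤ ∑ _n ∈ Icc 2 b, (b * x) ^ 2 := sum_le_sum hterm
    _ = (Icc 2 b).card * (b * x) ^ 2 := by rw [sum_const, nsmul_eq_mul]
    _ ≤ b * (b * x) ^ 2 := by gcongr

theorem le_of_le_sq_add_sum_choose_mul_pow {b : ℕ} {E : ℝ} (hE : 0 ≤ E)
    (hsmall : (1 + (b : ℝ) ^ 3) * E ≤ 1) (q : ℕ → ℝ) (hq : ∀ ℓ, 1 ≤ ℓ → 0 ≤ q ℓ)
    (hq₁ : q 1 ≤ E ^ 2)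
    (hrec : ∀ ℓ, 1 ≤ ℓ → q (ℓ + 1) ≤ E ^ 2 + ∑ n ∈ Icc 2 b, (b.choose n : ℝ) * q ℓ ^ n) :
    ∀ ℓ, 1 ≤ ℓ → q ℓ ≤ E := by
  have hE₁ : E ≤ 1 :=
    (le_mul_of_one_le_left hE (le_add_of_nonneg_right (by positivity))).trans hsmall
  have hb : (b : ℝ) ≤ 1 + (b : ℝ) ^ 3 := by
    exact_mod_cast (Nat.le_self_pow three_ne_zero b).trans (Nat.le_add_left _ 1)
  have hbE : (b : ℝ) * E ≤ 1 := (mul_le_mul_of_nonneg_right hb hE).trans hsmall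
  have hstep : E ^ 2 + b * (b * E) ^ 2 ≤ E := by
    have : E ^ 2 + b * (b * E) ^ 2 = ((1 + (b : ℝ) ^ 3) * E) * E := by ring
    rw [this]
    exact mul_le_of_le_one_left hE hsmall
  intro ℓ hℓ
  induction ℓ, hℓ using Nat.le_induction with
  | base => exact hq₁.trans (pow_le_of_le_one hE hE₁ two_ne_zero)
  | succ ℓ hℓ ih =>
    have hbq : (b : ℝ) * q ℓ ≤ 1 := le_trans (by gcongr) hbE
    calc q (ℓ + 1) ≤ E ^ 2 + ∑ n ∈ Icc 2 b, (b.choose n : ℝ) * q ℓ ^ n := hrec ℓ hℓ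
      _ ≤ E ^ 2 + b * (b * q ℓ) ^ 2 := by gcongr; exact sum_Icc_two_choose_mul_pow_le (hq ℓ hℓ) hbq
      _ ≤ E ^ 2 + b * (b * E) ^ 2 := by have := hq ℓ hℓ; gcongr
      _ ≤ E := hstep

theorem eventually_one_add_pow_mul_exp_neg_mul_le_one {c : ℝ} (hc : 0 < c) (k : ℕ) :
    ∀ᶠ x in atTop, (1 + x ^ k) * exp (-(c * x)) ≤ 1 := by
  have hlim : Tendsto (fun x : ℝ => x ^ (0 : ℝ) * exp (-c * x) + x ^ (k : ℝ) * exp (-c * x))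
      atTop (nhds 0) := by
    simpa using (tendsto_rpow_mul_exp_neg_mul_atTop_nhds_zero 0 c hc).add
      (tendsto_rpow_mul_exp_neg_mul_atTop_nhds_zero k c hc)
  filter_upwards [hlim.eventually_le_const one_pos] with x hx
  simpa [Real.rpow_natCast, add_mul, neg_mul] using hx

/-- for every `a > 0` and all large `b`, if `q_1 ≤ e^{-ab}` and
`q_{ℓ+1} ≤ e^{-ab} + Σ_{n=2}^b C(b,n) q_ℓⁿ`, then `q_ℓ ≤ e^{-ab/2}` for every `ℓ ≥ 1`. -/
theorem stmt14 (a : ℝ) (ha : 0 < a) :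
    ∃ b₀ : ℕ, ∀ b : ℕ, b₀ ≤ b →
      ∀ q : ℕ → ℝ, (∀ ℓ : ℕ, 1 ≤ ℓ → 0 ≤ q ℓ) →
        q 1 ≤ Real.exp (-(a * b)) →
        (∀ ℓ : ℕ, 1 ≤ ℓ →
          q (ℓ + 1) ≤ Real.exp (-(a * b)) +
            ∑ n ∈ Finset.Icc 2 b, (b.choose n : ℝ) * q ℓ ^ n) →
        ∀ ℓ : ℕ, 1 ≤ ℓ → q ℓ ≤ Real.exp (-(a * b / 2)) := by
  obtain ⟨b₀, hb₀⟩ := eventually_atTop.1 <| tendsto_natCast_atTop_atTop.eventually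
    (eventually_one_add_pow_mul_exp_neg_mul_le_one (half_pos ha) 3)
  refine ⟨b₀, fun b hb q hq hq₁ hrec => ?_⟩
  have hsq : exp (-(a * b)) = exp (-(a * b / 2)) ^ 2 := by
    rw [← exp_nat_mul]; ring_nf
  rw [hsq] at hq₁ hrec
  refine le_of_le_sq_add_sum_choose_mul_pow (exp_pos _).le ?_ q hq hq₁ hrec
  simpa [mul_div_right_comm] using hb₀ b hb

end Paper
end

section
/- For every a ∈ (0,1], every integer b ≥ 2, and every u ∈ (0,1), there exists ε₀ ∈ (0,1) such that for every ε ∈ (0, ε₀] the following holds: let k be an integer with k ≥ 4/a and let r₀, r₁, …, r_k be nonnegative real numbers satisfying r_j ≤ ε^{a−(b−1)} (2ε)^{b−1} F_ε(r_{j−1}) for every 1 ≤ j ≤ k, where F_ε(x) := (ε + x)/(1 + εx). Then r_k ≤ u ε. -/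
/-!
With `C = ε^(a-(b-1)) (2ε)^(b-1) = 2^(b-1) ε^a`, the bounds `F_ε(x) ≤ 1/ε` (first step) and
`F_ε(x) ≤ ε + x` (later steps) give `r_j ≤ C^j/ε + 2Cε` as long as `C ≤ 1/2`. Splitting
`C = c ε^(a/2)` with `c = 2^(b-1) ε^(a/2)` small, `C^k ≤ c ε^(ak/2) ≤ c ε²` once `ak ≥ 4`,
so both terms are `O(c ε)`, and `c ≤ u/8` for `ε` small enough.
-/

namespace Paper

/-- The one-step transfer function `F_ε(x) = (ε + x)/(1 + εx)` of the Ising ratio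
recursion. -/
noncomputable def Ftr (ε x : ℝ) : ℝ := (ε + x) / (1 + ε * x)

lemma Ftr_le_inv {ε x : ℝ} (hε : 0 < ε) (hε1 : ε ≤ 1) (hx : 0 ≤ x) : Ftr ε x ≤ ε⁻¹ := by
  rw [Ftr, ← one_div, div_le_div_iff₀ (by positivity) hε]
  nlinarith

lemma Ftr_le_add {ε x : ℝ} (hε : 0 < ε) (hx : 0 ≤ x) : Ftr ε x ≤ ε + x :=
  div_le_self (by positivity) (by nlinarith)

lemma le_pow_div_add_of_le_mul_Ftr {ε C : ℝ} {k : ℕ} {r : ℕ → ℝ} (hε : 0 < ε) (hε1 : ε ≤ 1)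
    (hC0 : 0 ≤ C) (hC : C ≤ 1 / 2) (hr : ∀ j, 0 ≤ r j)
    (hrec : ∀ j, 1 ≤ j → j ≤ k → r j ≤ C * Ftr ε (r (j - 1))) :
    ∀ j, 1 ≤ j → j ≤ k → r j ≤ C ^ j / ε + 2 * C * ε := by
  intro j hj
  induction j, hj using Nat.le_induction with
  | base =>
    intro hk
    calc r 1 ≤ C * Ftr ε (r 0) := hrec 1 le_rfl hk
      _ ≤ C * ε⁻¹ := mul_le_mul_of_nonneg_left (Ftr_le_inv hε hε1 (hr 0)) hC0
      _ ≤ C ^ 1 / ε + 2 * C * ε := by rw [pow_one, div_eq_mul_inv]; nlinarith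
  | succ n hn ih =>
    intro hk
    have hstep : r (n + 1) ≤ C * Ftr ε (r n) := hrec (n + 1) (by omega) hk
    calc r (n + 1) ≤ C * (ε + r n) :=
          hstep.trans (mul_le_mul_of_nonneg_left (Ftr_le_add hε (hr n)) hC0)
      _ ≤ C * (ε + (C ^ n / ε + 2 * C * ε)) := by gcongr; exact ih (by omega)
      _ = C ^ (n + 1) / ε + C * ε * (1 + 2 * C) := by ring
      _ ≤ C ^ (n + 1) / ε + 2 * C * ε := by nlinarith [mul_nonneg hC0 hε.le]

lemma rpow_sub_mul_two_mul_pow {ε a : ℝ} (hε : 0 < ε) {b : ℕ} (hb : 1 ≤ b) :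
    ε ^ (a - ((b : ℝ) - 1)) * (2 * ε) ^ (b - 1) = 2 ^ (b - 1) * ε ^ a := by
  have hcast : ((b - 1 : ℕ) : ℝ) = (b : ℝ) - 1 := by push_cast [Nat.cast_sub hb]; ring
  rw [mul_pow, ← Real.rpow_natCast ε, hcast, Real.rpow_sub hε a, Real.rpow_sub hε (b : ℝ)]
  field_simp

lemma mul_rpow_half_pow_le {c ε a : ℝ} {k : ℕ} (hc0 : 0 ≤ c) (hc1 : c ≤ 1) (hε : 0 < ε)
    (hε1 : ε ≤ 1) (hak : 4 ≤ a * k) : (c * ε ^ (a / 2)) ^ k ≤ c * ε ^ 2 := by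
  have hk : k ≠ 0 := by rintro rfl; norm_num at hak
  have hεk : (ε ^ (a / 2)) ^ k ≤ ε ^ 2 := by
    rw [← Real.rpow_natCast, ← Real.rpow_mul hε.le, ← Real.rpow_natCast ε 2]
    exact Real.rpow_le_rpow_of_exponent_ge hε hε1 (by push_cast; linarith)
  rw [mul_pow]
  exact mul_le_mul (pow_le_of_le_one hc0 hc1 hk) hεk (by positivity) hc0

theorem stmt15_general (a : ℝ) (ha0 : 0 < a) (b : ℕ) (hb : 2 ≤ b)
    (u : ℝ) (hu0 : 0 < u) (hu1 : u < 1) :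
    ∃ ε₀ : ℝ, 0 < ε₀ ∧ ε₀ < 1 ∧
      ∀ ε : ℝ, 0 < ε → ε ≤ ε₀ →
        ∀ k : ℕ, 4 / a ≤ (k : ℝ) →
          ∀ r : ℕ → ℝ, (∀ j : ℕ, 0 ≤ r j) →
            (∀ j : ℕ, 1 ≤ j → j ≤ k →
              r j ≤ ε ^ (a - ((b : ℝ) - 1)) * (2 * ε) ^ (b - 1) * Ftr ε (r (j - 1))) →
            r k ≤ u * ε := by
  set δ : ℝ := u / (8 * 2 ^ (b - 1))
  refine ⟨min (δ ^ (a / 2)⁻¹) (1 / 2), by positivity, (min_le_right _ _).trans_lt (by norm_num), ?_⟩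
  intro ε hε hεε₀ k hk r hr hrec
  have hε1 : ε ≤ 1 := hεε₀.trans ((min_le_right _ _).trans (by norm_num))
  have hεδ : ε ^ (a / 2) ≤ δ :=
    (Real.le_rpow_inv_iff_of_pos hε.le (by positivity) (by positivity)).1
      (hεε₀.trans (min_le_left _ _))
  set c : ℝ := 2 ^ (b - 1) * ε ^ (a / 2)
  have hc : c ≤ u / 8 := by
    calc c ≤ 2 ^ (b - 1) * δ := mul_le_mul_of_nonneg_left hεδ (by positivity)
      _ = u / 8 := by simp only [δ]; field_simp
  have hεa : ε ^ (a / 2) ≤ 1 := Real.rpow_le_one hε.le hε1 (by positivity)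
  have hCc : c * ε ^ (a / 2) ≤ c := mul_le_of_le_one_right (by positivity) hεa
  have hcoeff : ε ^ (a - ((b : ℝ) - 1)) * (2 * ε) ^ (b - 1) = c * ε ^ (a / 2) := by
    rw [rpow_sub_mul_two_mul_pow hε (by omega), mul_assoc, ← Real.rpow_add hε, add_halves]
  simp only [hcoeff] at hrec
  have hak : 4 ≤ a * k := by rwa [div_le_iff₀ ha0, mul_comm] at hk
  have hk1 : 1 ≤ k := Nat.one_le_iff_ne_zero.2 (by rintro rfl; norm_num at hak)
  have hrk :=
    le_pow_div_add_of_le_mul_Ftr hε hε1 (by positivity) (by linarith) hr hrec k hk1 le_rfl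
  have hCk : (c * ε ^ (a / 2)) ^ k / ε ≤ c * ε := by
    have hc1 : c ≤ 1 := by linarith
    rw [div_le_iff₀ hε]
    linarith [mul_rpow_half_pow_le (by positivity) hc1 hε hε1 hak]
  calc r k ≤ (c * ε ^ (a / 2)) ^ k / ε + 2 * (c * ε ^ (a / 2)) * ε := hrk
    _ ≤ c * ε + 2 * c * ε := add_le_add hCk (by gcongr)
    _ ≤ u * ε := by nlinarith

/-- contraction along a chain of `k ≥ 4/a` consecutive regular vertices:
if `r_j ≤ ε^{a-(b-1)} (2ε)^{b-1} F_ε(r_{j-1})` for `1 ≤ j ≤ k`, then `r_k ≤ uε`. -/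
theorem stmt15 (a : ℝ) (ha0 : 0 < a) (ha1 : a ≤ 1) (b : ℕ) (hb : 2 ≤ b)
    (u : ℝ) (hu0 : 0 < u) (hu1 : u < 1) :
    ∃ ε₀ : ℝ, 0 < ε₀ ∧ ε₀ < 1 ∧
      ∀ ε : ℝ, 0 < ε → ε ≤ ε₀ →
        ∀ k : ℕ, 4 / a ≤ (k : ℝ) →
          ∀ r : ℕ → ℝ, (∀ j : ℕ, 0 ≤ r j) →
            (∀ j : ℕ, 1 ≤ j → j ≤ k →
              r j ≤ ε ^ (a - ((b : ℝ) - 1)) * (2 * ε) ^ (b - 1) * Ftr ε (r (j - 1))) →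
            r k ≤ u * ε :=
  stmt15_general a ha0 b hb u hu0 hu1

end Paper
end

section
/- There exists λ₀ < ∞ such that for every λ ≥ λ₀ and all real numbers s₁, s₂, s₃, s₄ ≥ 0 the following holds. Set r := λ · (1 + λ/((1+s₁)(1+s₂)))^{−1} · (1 + λ/((1+s₃)(1+s₄)))^{−1}. If s₁ > √λ, s₂ > √λ and s₃ > √λ, then r > 3; and if in addition r ≤ √λ, then s₄ ≤ 3. -/
/-!
Write `λ = t²`. Since `s₁, s₂ > t`, the first child ratio `a = λ/((1+s₁)(1+s₂))` is below `1`,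
and since `s₃ > t`, the second child ratio is `b ≤ t/(1+s₄) ≤ t`. Hence the root ratio
`r = λ/((1+a)(1+b))` exceeds `t²/(2(1+b)) ≥ t²/(2(1+t))`, which is larger than `3` once `t ≥ 7`.
If moreover `r ≤ t`, then `t < 2(1+b) ≤ 2 + 2t/(1+s₄)`, which is impossible for `s₄ > 3` and `t ≥ 4`.
-/

namespace Paper

/-- The hard-core ratio recursion `R = λ ∏ᵢ (1 + Rᵢ)⁻¹` at a vertex with two children. -/
noncomputable def ratioStep (lam x y : ℝ) : ℝ := lam * (1 + x)⁻¹ * (1 + y)⁻¹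

section ratioStep

variable {lam t x y : ℝ}

theorem ratioStep_eq_div (lam x y : ℝ) : ratioStep lam x y = lam / ((1 + x) * (1 + y)) := by
  rw [ratioStep, mul_assoc, ← mul_inv, div_eq_mul_inv]

theorem ratioStep_nonneg (hlam : 0 ≤ lam) (hx : 0 ≤ x) (hy : 0 ≤ y) : 0 ≤ ratioStep lam x y := by
  unfold ratioStep
  positivity

theorem ratioStep_sq_lt_one (ht : 0 ≤ t) (hx : t < x) (hy : t < y) : ratioStep (t ^ 2) x y < 1 := by
  rw [ratioStep_eq_div, div_lt_one (by nlinarith)]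
  nlinarith

theorem ratioStep_sq_le_div (ht : 0 ≤ t) (hx : t ≤ x) (hy : 0 ≤ y) :
    ratioStep (t ^ 2) x y ≤ t / (1 + y) := by
  rw [ratioStep_eq_div, div_le_div_iff₀ (by nlinarith) (by positivity)]
  nlinarith [mul_nonneg ht (by linarith : (0 : ℝ) ≤ 1 + y)]

theorem sq_div_lt_ratioStep_sq (ht : 0 < t) (hx₀ : 0 ≤ x) (hx₁ : x < 1) (hy : 0 ≤ y) :
    t ^ 2 / (2 * (1 + y)) < ratioStep (t ^ 2) x y := by
  rw [ratioStep_eq_div]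
  apply div_lt_div_of_pos_left (by positivity) (by positivity)
  nlinarith

end ratioStep

theorem ratioStep_ratioStep_bounds {lam s₁ s₂ s₃ s₄ : ℝ} (hlam : 49 ≤ lam) (hs₄ : 0 ≤ s₄)
    (h₁ : √lam < s₁) (h₂ : √lam < s₂) (h₃ : √lam < s₃) :
    3 < ratioStep lam (ratioStep lam s₁ s₂) (ratioStep lam s₃ s₄) ∧
      (ratioStep lam (ratioStep lam s₁ s₂) (ratioStep lam s₃ s₄) ≤ √lam → s₄ ≤ 3) := by
  obtain ⟨t, ht, rfl⟩ : ∃ t, 7 ≤ t ∧ lam = t ^ 2 :=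
    ⟨√lam, Real.le_sqrt_of_sq_le (by linarith), (Real.sq_sqrt (by linarith)).symm⟩
  rw [Real.sqrt_sq (by linarith)] at *
  set a := ratioStep (t ^ 2) s₁ s₂
  set b := ratioStep (t ^ 2) s₃ s₄
  have ha₀ : 0 ≤ a := ratioStep_nonneg (by positivity) (by linarith) (by linarith)
  have ha₁ : a < 1 := ratioStep_sq_lt_one (by linarith) h₁ h₂
  have hb₀ : 0 ≤ b := ratioStep_nonneg (by positivity) (by linarith) hs₄
  have hb : b ≤ t / (1 + s₄) := ratioStep_sq_le_div (by linarith) h₃.le hs₄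
  have hr : t ^ 2 / (2 * (1 + b)) < ratioStep (t ^ 2) a b :=
    sq_div_lt_ratioStep_sq (by linarith) ha₀ ha₁ hb₀
  refine ⟨?_, fun hrt => ?_⟩
  · have hbt : b ≤ t := hb.trans (div_le_self (by linarith) (by linarith))
    calc 3 ≤ t ^ 2 / (2 * (1 + t)) := by rw [le_div_iff₀ (by positivity)]; nlinarith
      _ ≤ t ^ 2 / (2 * (1 + b)) := by gcongr
      _ < _ := hr
  · have htb : t < 2 * (1 + b) := by
      rw [div_lt_iff₀ (by positivity)] at hr
      nlinarith
    by_contra! hs₄'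
    have : t / (1 + s₄) < t / 4 := div_lt_div_of_pos_left (by linarith) (by norm_num) (by linarith)
    linarith

/-- the deterministic step behind the hard-core ratio recursion on the
binary tree: for `λ` large, if `s₁, s₂, s₃ > √λ` then
`r = λ (1 + λ/((1+s₁)(1+s₂)))⁻¹ (1 + λ/((1+s₃)(1+s₄)))⁻¹ > 3`, and if moreover `r ≤ √λ`
then `s₄ ≤ 3`. -/
theorem stmt17 :
    ∃ lam₀ : ℝ, ∀ lam : ℝ, lam₀ ≤ lam →
      ∀ s₁ s₂ s₃ s₄ : ℝ, 0 ≤ s₁ → 0 ≤ s₂ → 0 ≤ s₃ → 0 ≤ s₄ →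
        Real.sqrt lam < s₁ → Real.sqrt lam < s₂ → Real.sqrt lam < s₃ →
          (3 < lam * (1 + lam / ((1 + s₁) * (1 + s₂)))⁻¹ *
                (1 + lam / ((1 + s₃) * (1 + s₄)))⁻¹ ∧
            (lam * (1 + lam / ((1 + s₁) * (1 + s₂)))⁻¹ *
                (1 + lam / ((1 + s₃) * (1 + s₄)))⁻¹ ≤ Real.sqrt lam → s₄ ≤ 3)) := by
  refine ⟨49, fun lam hlam s₁ s₂ s₃ s₄ _ _ _ hs₄ h₁ h₂ h₃ => ?_⟩
  rw [← ratioStep_eq_div, ← ratioStep_eq_div]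
  exact ratioStep_ratioStep_bounds hlam hs₄ h₁ h₂ h₃

end Paper
end
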